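/- There is an absolute constant C such that in the LASLiN model on n ≥ 2 nodes, for any assignment of integer predictions p : V → {1,…,⌈ln n⌉} and any two distinct nodes u and v, the expected length of the routing path from u to v is at most C·ln² n. Consequently, for any nonnegative demand matrix W, the expected total weighted path length E[Σ_{u≠v} W(u,v)·d(u,v)] is at most C·ln² n·|W|, where |W| = Σ_{u,v} W(u,v). -/

import Mathlib

open scoped Classical ENNReal NNReal
open MeasureTheory ProbabilityTheory

namespace P2P

variable {n : ℕ}

/-- Edge relation of a (continuous) skip list network: `u` and `v` are neighbors iff no node
strictly between them has height at least `min (h u) (h v)`. -/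
def IsEdge {α : Type*} [LinearOrder α] (h : Fin n → α) (u v : Fin n) : Prop :=
  u ≠ v ∧ ∀ x : Fin n, min u v < x → x < max u v → h x < min (h u) (h v)

/-- The greedy next hop from `x` towards destination `v`. -/
noncomputable def nextHop {α : Type*} [LinearOrder α] (h : Fin n → α) (v x : Fin n) : Fin n :=
  if x < v then WithBot.unbotD x (Finset.univ.filter fun y => IsEdge h x y ∧ x < y ∧ y ≤ v).max
  else if v < x then WithTop.untopD x (Finset.univ.filter fun y => IsEdge h x y ∧ v ≤ y ∧ y < x).min
  else x

/-- The greedy routing path from `x` to `v`, with fuel. -/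
noncomputable def routeAux {α : Type*} [LinearOrder α] (h : Fin n → α) (v : Fin n) :
    ℕ → Fin n → List (Fin n)
  | 0, x => [x]
  | fuel + 1, x => if x = v then [x] else x :: routeAux h v fuel (nextHop h v x)

/-- The greedy routing path from `u` to `v` (as a list of visited nodes, starting at `u`
and ending at `v`). -/
noncomputable def route {α : Type*} [LinearOrder α] (h : Fin n → α) (u v : Fin n) :
    List (Fin n) :=
  routeAux h v n u

/-- The routing path length (number of hops) from `u` to `v`. -/
noncomputable def dist {α : Type*} [LinearOrder α] (h : Fin n → α) (u v : Fin n) : ℕ :=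
  (route h u v).length - 1


/-- The degree of `u`: its number of neighbors. -/
noncomputable def degree {α : Type*} [LinearOrder α] (h : Fin n → α) (u : Fin n) : ℕ :=
  (Finset.univ.filter fun w => IsEdge h u w).card

/-! ### Deterministic lemmas -/

lemma routeAux_length_pos (h : Fin n → ℝ) (v : Fin n) (fuel : ℕ) (x : Fin n) :
    1 ≤ (routeAux h v fuel x).length := by
  cases fuel with
  | zero => simp [routeAux]
  | succ f => by_cases hx : x = v <;> simp [routeAux, hx]

lemma routeAux_length_le (h : Fin n → ℝ) (v : Fin n) :
    ∀ fuel x, (routeAux h v fuel x).length ≤ fuel + 1 := by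
  intro fuel
  induction fuel with
  | zero => intro x; simp [routeAux]
  | succ f ih =>
    intro x
    by_cases hx : x = v
    · simp [routeAux, hx]
    · simp only [routeAux, if_neg hx, List.length_cons]
      have := ih (nextHop h v x)
      omega

lemma routeAux_self (h : Fin n → ℝ) (v : Fin n) (fuel : ℕ) :
    routeAux h v fuel v = [v] := by
  cases fuel <;> simp [routeAux]

lemma dist_self (h : Fin n → ℝ) (u : Fin n) : dist h u u = 0 := by
  simp [dist, route, routeAux_self]

lemma nextHop_spec_right {h : Fin n → ℝ} {x v : Fin n} (hxv : x < v) :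
    IsEdge h x (nextHop h v x) ∧ x < nextHop h v x ∧ nextHop h v x ≤ v ∧
    ∀ z, IsEdge h x z → x < z → z ≤ v → z ≤ nextHop h v x := by
  classical
  set F := (Finset.univ.filter fun y => IsEdge h x y ∧ x < y ∧ y ≤ v) with hF
  have hx1 : (x : ℕ) + 1 < n := by
    have := v.isLt
    have : (x : ℕ) < (v : ℕ) := hxv
    omega
  set y₀ : Fin n := ⟨(x : ℕ) + 1, hx1⟩ with hy₀
  have hxy₀ : x < y₀ := by simp [hy₀, Fin.lt_def]
  have hy₀v : y₀ ≤ v := by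
    have : (x : ℕ) < (v : ℕ) := hxv
    simp [hy₀, Fin.le_def]; omega
  have hmem : y₀ ∈ F := by
    refine Finset.mem_filter.2 ⟨Finset.mem_univ _, ⟨hxy₀.ne, ?_⟩, hxy₀, hy₀v⟩
    intro w hw1 hw2
    rw [min_eq_left hxy₀.le] at hw1
    rw [max_eq_right hxy₀.le] at hw2
    have h1 : (x : ℕ) < (w : ℕ) := hw1
    have h2 : (w : ℕ) < (x : ℕ) + 1 := hw2
    omega
  have hne : F.Nonempty := ⟨y₀, hmem⟩
  have hnx : nextHop h v x = F.max' hne := by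
    rw [nextHop, if_pos hxv, ← hF, ← Finset.coe_max' hne, WithBot.unbotD_coe]
  have hmem' := F.max'_mem hne
  rw [Finset.mem_filter] at hmem'
  refine ⟨by rw [hnx]; exact hmem'.2.1, by rw [hnx]; exact hmem'.2.2.1,
    by rw [hnx]; exact hmem'.2.2.2, ?_⟩
  intro z hz1 hz2 hz3
  rw [hnx]
  exact Finset.le_max' F z (Finset.mem_filter.2 ⟨Finset.mem_univ _, hz1, hz2, hz3⟩)

lemma nextHop_spec_left {h : Fin n → ℝ} {x v : Fin n} (hxv : v < x) :
    IsEdge h x (nextHop h v x) ∧ v ≤ nextHop h v x ∧ nextHop h v x < x ∧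
    ∀ z, IsEdge h x z → v ≤ z → z < x → nextHop h v x ≤ z := by
  classical
  set F := (Finset.univ.filter fun y => IsEdge h x y ∧ v ≤ y ∧ y < x) with hF
  have hx1 : (x : ℕ) - 1 < n := by have := x.isLt; omega
  have hxpos : 0 < (x : ℕ) := by
    have : (v : ℕ) < (x : ℕ) := hxv
    omega
  set y₀ : Fin n := ⟨(x : ℕ) - 1, hx1⟩ with hy₀
  have hxy₀ : y₀ < x := by simp [hy₀, Fin.lt_def]; omega
  have hy₀v : v ≤ y₀ := by
    have : (v : ℕ) < (x : ℕ) := hxv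
    simp [hy₀, Fin.le_def]; omega
  have hmem : y₀ ∈ F := by
    refine Finset.mem_filter.2 ⟨Finset.mem_univ _, ⟨hxy₀.ne', ?_⟩, hy₀v, hxy₀⟩
    intro w hw1 hw2
    rw [min_eq_right hxy₀.le] at hw1
    rw [max_eq_left hxy₀.le] at hw2
    have h1 : (x : ℕ) - 1 < (w : ℕ) := hw1
    have h2 : (w : ℕ) < (x : ℕ) := hw2
    omega
  have hne : F.Nonempty := ⟨y₀, hmem⟩
  have hnx : nextHop h v x = F.min' hne := by
    rw [nextHop, if_neg (asymm hxv), if_pos hxv, ← hF, ← Finset.coe_min' hne, WithTop.untopD_coe]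
  have hmem' := F.min'_mem hne
  rw [Finset.mem_filter] at hmem'
  refine ⟨by rw [hnx]; exact hmem'.2.1, by rw [hnx]; exact hmem'.2.2.1,
    by rw [hnx]; exact hmem'.2.2.2, ?_⟩
  intro z hz1 hz2 hz3
  rw [hnx]
  exact Finset.min'_le F z (Finset.mem_filter.2 ⟨Finset.mem_univ _, hz1, hz2, hz3⟩)

lemma desc_step_right {h : Fin n → ℝ} (hinj : Function.Injective h) {x v : Fin n} (hxv : x < v)
    (hlow : h (nextHop h v x) < h x) :
    ∀ w ∈ Finset.Ioc (nextHop h v x) v, h w < h (nextHop h v x) := by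
  classical
  obtain ⟨hedge, hxy, hyv, hmax⟩ := nextHop_spec_right (h := h) hxv
  set y := nextHop h v x with hy
  by_contra hcon
  push_neg at hcon
  obtain ⟨w, hwmem, hwge⟩ := hcon
  have hwy : y < w := (Finset.mem_Ioc.1 hwmem).1
  have hwne : h w ≠ h y := fun e => hwy.ne' (hinj e)
  set B := (Finset.Ioc y v).filter (fun w => h y < h w) with hB
  have hBne : B.Nonempty := ⟨w, Finset.mem_filter.2 ⟨hwmem, lt_of_le_of_ne hwge hwne.symm⟩⟩
  set w0 := B.min' hBne with hw0
  have hw0B := B.min'_mem hBne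
  rw [Finset.mem_filter, Finset.mem_Ioc] at hw0B
  obtain ⟨⟨hyw0, hw0v⟩, hhw0⟩ := hw0B
  have hxw0 : x < w0 := hxy.trans hyw0
  have hedge0 : IsEdge h x w0 := by
    refine ⟨hxw0.ne, ?_⟩
    intro t ht1 ht2
    rw [min_eq_left hxw0.le] at ht1
    rw [max_eq_right hxw0.le] at ht2
    rcases lt_trichotomy t y with hty | hty | hty
    · have hm := hedge.2 t (by rwa [min_eq_left hxy.le]) (by rwa [max_eq_right hxy.le])
      rw [lt_min_iff] at hm
      exact lt_min hm.1 (hm.2.trans hhw0)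
    · subst hty
      exact lt_min hlow hhw0
    · have h1 : ¬ h y < h t := by
        intro hc
        have htB : t ∈ B := Finset.mem_filter.2
          ⟨Finset.mem_Ioc.2 ⟨hty, le_trans ht2.le hw0v⟩, hc⟩
        exact absurd (Finset.min'_le B t htB) (not_le.2 ht2)
      have h2 : h t ≠ h y := fun e => hty.ne' (hinj e)
      have h3 : h t < h y := lt_of_le_of_ne (not_lt.1 h1) h2
      exact lt_min (h3.trans hlow) (h3.trans hhw0)
  exact absurd (hmax w0 hedge0 hxw0 hw0v) (not_le.2 hyw0)

lemma desc_step_left {h : Fin n → ℝ} (hinj : Function.Injective h) {x v : Fin n} (hxv : v < x)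
    (hlow : h (nextHop h v x) < h x) :
    ∀ w ∈ Finset.Ico v (nextHop h v x), h w < h (nextHop h v x) := by
  classical
  obtain ⟨hedge, hvy, hyx, hmin⟩ := nextHop_spec_left (h := h) hxv
  set y := nextHop h v x with hy
  by_contra hcon
  push_neg at hcon
  obtain ⟨w, hwmem, hwge⟩ := hcon
  have hwy : w < y := (Finset.mem_Ico.1 hwmem).2
  have hwne : h w ≠ h y := fun e => hwy.ne (hinj e)
  set B := (Finset.Ico v y).filter (fun w => h y < h w) with hB
  have hBne : B.Nonempty := ⟨w, Finset.mem_filter.2 ⟨hwmem, lt_of_le_of_ne hwge hwne.symm⟩⟩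
  set w0 := B.max' hBne with hw0
  have hw0B := B.max'_mem hBne
  rw [Finset.mem_filter, Finset.mem_Ico] at hw0B
  obtain ⟨⟨hvw0, hw0y⟩, hhw0⟩ := hw0B
  have hw0x : w0 < x := hw0y.trans hyx
  have hedge0 : IsEdge h x w0 := by
    refine ⟨hw0x.ne', ?_⟩
    intro t ht1 ht2
    rw [min_eq_right hw0x.le] at ht1
    rw [max_eq_left hw0x.le] at ht2
    rcases lt_trichotomy t y with hty | hty | hty
    · have h1 : ¬ h y < h t := by
        intro hc
        have htB : t ∈ B := Finset.mem_filter.2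
          ⟨Finset.mem_Ico.2 ⟨le_trans hvw0 ht1.le, hty⟩, hc⟩
        exact absurd (Finset.le_max' B t htB) (not_le.2 ht1)
      have h2 : h t ≠ h y := fun e => hty.ne (hinj e)
      have h3 : h t < h y := lt_of_le_of_ne (not_lt.1 h1) h2
      exact lt_min (h3.trans hlow) (h3.trans hhw0)
    · subst hty
      exact lt_min hlow hhw0
    · have hm := hedge.2 t (by rwa [min_eq_right hyx.le]) (by rwa [max_eq_left hyx.le])
      rw [lt_min_iff] at hm
      exact lt_min hm.1 (hm.2.trans hhw0)
  exact absurd (hmin w0 hedge0 hvw0 hw0x) (not_le.2 hw0y)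

lemma asc_step_right {h : Fin n → ℝ} {u x v : Fin n} (hxv : x < v)
    (hhi : h x < h (nextHop h v x))
    (hasc : ∀ w ∈ Finset.Ioo u x, h w < h x) :
    ∀ w ∈ Finset.Ioo u (nextHop h v x), h w < h (nextHop h v x) := by
  obtain ⟨hedge, hxy, hyv, hmax⟩ := nextHop_spec_right (h := h) hxv
  intro w hw
  rw [Finset.mem_Ioo] at hw
  rcases lt_trichotomy w x with hwx | hwx | hwx
  · exact (hasc w (Finset.mem_Ioo.2 ⟨hw.1, hwx⟩)).trans hhi
  · subst hwx; exact hhi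
  · have hm := hedge.2 w (by rw [min_eq_left hxy.le]; exact hwx)
      (by rw [max_eq_right hxy.le]; exact hw.2)
    rw [lt_min_iff] at hm
    exact hm.2

lemma asc_step_left {h : Fin n → ℝ} {u x v : Fin n} (hxv : v < x)
    (hhi : h x < h (nextHop h v x))
    (hasc : ∀ w ∈ Finset.Ioo x u, h w < h x) :
    ∀ w ∈ Finset.Ioo (nextHop h v x) u, h w < h (nextHop h v x) := by
  obtain ⟨hedge, hvy, hyx, hmin⟩ := nextHop_spec_left (h := h) hxv
  intro w hw
  rw [Finset.mem_Ioo] at hw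
  rcases lt_trichotomy w x with hwx | hwx | hwx
  · have hm := hedge.2 w (by rw [min_eq_right hyx.le]; exact hw.1)
      (by rw [max_eq_left hyx.le]; exact hwx)
    rw [lt_min_iff] at hm
    exact hm.2
  · subst hwx; exact hhi
  · exact (hasc w (Finset.mem_Ioo.2 ⟨hwx, hw.2⟩)).trans hhi

lemma count_right {h : Fin n → ℝ} (hinj : Function.Injective h) (u v : Fin n) :
    ∀ fuel (x : Fin n), u ≤ x → x ≤ v →
      ((∀ w ∈ Finset.Ioo u x, h w < h x) →
        (routeAux h v fuel x).length - 1 ≤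
          ((Finset.Ioc x v).filter fun z => ∀ w ∈ Finset.Ioo u z, h w < h z).card +
          ((Finset.Ioc x v).filter fun z => ∀ w ∈ Finset.Ioc z v, h w < h z).card) ∧
      ((∀ w ∈ Finset.Ioc x v, h w < h x) →
        (routeAux h v fuel x).length - 1 ≤
          ((Finset.Ioc x v).filter fun z => ∀ w ∈ Finset.Ioc z v, h w < h z).card) := by
  classical
  intro fuel
  induction fuel with
  | zero => intro x _ _; constructor <;> intro _ <;> simp [routeAux]
  | succ f ih =>
    intro x hux hxv
    by_cases hxe : x = v
    · constructor <;> intro _ <;> simp [routeAux, hxe]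
    · have hxv' : x < v := lt_of_le_of_ne hxv hxe
      obtain ⟨hedge, hxy, hyv, hmax⟩ := nextHop_spec_right (h := h) hxv'
      set y := nextHop h v x with hy
      have hlen : (routeAux h v (f+1) x).length - 1 = ((routeAux h v f y).length - 1) + 1 := by
        rw [routeAux, if_neg hxe, List.length_cons, ← hy]
        have := routeAux_length_pos h v f y
        omega
      have hyne : h x ≠ h y := fun e => (ne_of_lt hxy) (hinj e)
      have hsubIoc : Finset.Ioc y v ⊆ Finset.Ioc x v := Finset.Ioc_subset_Ioc_left hxy.le
      have hynotmem : ∀ (P : Fin n → Prop) [DecidablePred P],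
          y ∉ (Finset.Ioc y v).filter P := by
        intro P _ hc
        exact absurd ((Finset.mem_Ioc.1 (Finset.mem_filter.1 hc).1).1) (lt_irrefl y)
      constructor
      · intro hasc
        rcases hyne.lt_or_gt with hhi | hlow
        · have hascy : ∀ w ∈ Finset.Ioo u y, h w < h y := asc_step_right hxv' hhi hasc
          have hIH := (ih y (hux.trans hxy.le) hyv).1 hascy
          have hins : insert y ((Finset.Ioc y v).filter fun z => ∀ w ∈ Finset.Ioo u z, h w < h z)
              ⊆ (Finset.Ioc x v).filter fun z => ∀ w ∈ Finset.Ioo u z, h w < h z := by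
            intro a ha
            rcases Finset.mem_insert.1 ha with rfl | ha
            · exact Finset.mem_filter.2 ⟨Finset.mem_Ioc.2 ⟨hxy, hyv⟩, hascy⟩
            · exact Finset.filter_subset_filter _ hsubIoc ha
          have hcard1 : ((Finset.Ioc y v).filter fun z => ∀ w ∈ Finset.Ioo u z, h w < h z).card + 1
              ≤ ((Finset.Ioc x v).filter fun z => ∀ w ∈ Finset.Ioo u z, h w < h z).card := by
            rw [← Finset.card_insert_of_notMem (hynotmem _)]
            exact Finset.card_le_card hins
          have hcard2 := Finset.card_le_card
            (Finset.filter_subset_filter (fun z => ∀ w ∈ Finset.Ioc z v, h w < h z) hsubIoc)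
          omega
        · have hdescy : ∀ w ∈ Finset.Ioc y v, h w < h y := desc_step_right hinj hxv' hlow
          have hIH := (ih y (hux.trans hxy.le) hyv).2 hdescy
          have hins : insert y ((Finset.Ioc y v).filter fun z => ∀ w ∈ Finset.Ioc z v, h w < h z)
              ⊆ (Finset.Ioc x v).filter fun z => ∀ w ∈ Finset.Ioc z v, h w < h z := by
            intro a ha
            rcases Finset.mem_insert.1 ha with rfl | ha
            · exact Finset.mem_filter.2 ⟨Finset.mem_Ioc.2 ⟨hxy, hyv⟩, hdescy⟩
            · exact Finset.filter_subset_filter _ hsubIoc ha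
          have hcard1 : ((Finset.Ioc y v).filter fun z => ∀ w ∈ Finset.Ioc z v, h w < h z).card + 1
              ≤ ((Finset.Ioc x v).filter fun z => ∀ w ∈ Finset.Ioc z v, h w < h z).card := by
            rw [← Finset.card_insert_of_notMem (hynotmem _)]
            exact Finset.card_le_card hins
          omega
      · intro hdesc
        have hlow : h y < h x := hdesc y (Finset.mem_Ioc.2 ⟨hxy, hyv⟩)
        have hdescy : ∀ w ∈ Finset.Ioc y v, h w < h y := desc_step_right hinj hxv' hlow
        have hIH := (ih y (hux.trans hxy.le) hyv).2 hdescy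
        have hins : insert y ((Finset.Ioc y v).filter fun z => ∀ w ∈ Finset.Ioc z v, h w < h z)
            ⊆ (Finset.Ioc x v).filter fun z => ∀ w ∈ Finset.Ioc z v, h w < h z := by
          intro a ha
          rcases Finset.mem_insert.1 ha with rfl | ha
          · exact Finset.mem_filter.2 ⟨Finset.mem_Ioc.2 ⟨hxy, hyv⟩, hdescy⟩
          · exact Finset.filter_subset_filter _ hsubIoc ha
        have hcard1 : ((Finset.Ioc y v).filter fun z => ∀ w ∈ Finset.Ioc z v, h w < h z).card + 1
            ≤ ((Finset.Ioc x v).filter fun z => ∀ w ∈ Finset.Ioc z v, h w < h z).card := by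
          rw [← Finset.card_insert_of_notMem (hynotmem _)]
          exact Finset.card_le_card hins
        omega

lemma count_left {h : Fin n → ℝ} (hinj : Function.Injective h) (u v : Fin n) :
    ∀ fuel (x : Fin n), x ≤ u → v ≤ x →
      ((∀ w ∈ Finset.Ioo x u, h w < h x) →
        (routeAux h v fuel x).length - 1 ≤
          ((Finset.Ico v x).filter fun z => ∀ w ∈ Finset.Ioo z u, h w < h z).card +
          ((Finset.Ico v x).filter fun z => ∀ w ∈ Finset.Ico v z, h w < h z).card) ∧
      ((∀ w ∈ Finset.Ico v x, h w < h x) →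
        (routeAux h v fuel x).length - 1 ≤
          ((Finset.Ico v x).filter fun z => ∀ w ∈ Finset.Ico v z, h w < h z).card) := by
  classical
  intro fuel
  induction fuel with
  | zero => intro x _ _; constructor <;> intro _ <;> simp [routeAux]
  | succ f ih =>
    intro x hux hxv
    by_cases hxe : x = v
    · constructor <;> intro _ <;> simp [routeAux, hxe]
    · have hxv' : v < x := lt_of_le_of_ne hxv (Ne.symm hxe)
      obtain ⟨hedge, hvy, hyx, hmin⟩ := nextHop_spec_left (h := h) hxv'
      set y := nextHop h v x with hy
      have hlen : (routeAux h v (f+1) x).length - 1 = ((routeAux h v f y).length - 1) + 1 := by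
        rw [routeAux, if_neg hxe, List.length_cons, ← hy]
        have := routeAux_length_pos h v f y
        omega
      have hyne : h x ≠ h y := fun e => (ne_of_gt hyx) (hinj e)
      have hsubIco : Finset.Ico v y ⊆ Finset.Ico v x := Finset.Ico_subset_Ico_right hyx.le
      have hynotmem : ∀ (P : Fin n → Prop) [DecidablePred P],
          y ∉ (Finset.Ico v y).filter P := by
        intro P _ hc
        exact absurd ((Finset.mem_Ico.1 (Finset.mem_filter.1 hc).1).2) (lt_irrefl y)
      constructor
      · intro hasc
        rcases hyne.lt_or_gt with hhi | hlow
        · have hascy : ∀ w ∈ Finset.Ioo y u, h w < h y := asc_step_left hxv' hhi hasc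
          have hIH := (ih y (hyx.le.trans hux) hvy).1 hascy
          have hins : insert y ((Finset.Ico v y).filter fun z => ∀ w ∈ Finset.Ioo z u, h w < h z)
              ⊆ (Finset.Ico v x).filter fun z => ∀ w ∈ Finset.Ioo z u, h w < h z := by
            intro a ha
            rcases Finset.mem_insert.1 ha with rfl | ha
            · exact Finset.mem_filter.2 ⟨Finset.mem_Ico.2 ⟨hvy, hyx⟩, hascy⟩
            · exact Finset.filter_subset_filter _ hsubIco ha
          have hcard1 : ((Finset.Ico v y).filter fun z => ∀ w ∈ Finset.Ioo z u, h w < h z).card + 1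
              ≤ ((Finset.Ico v x).filter fun z => ∀ w ∈ Finset.Ioo z u, h w < h z).card := by
            rw [← Finset.card_insert_of_notMem (hynotmem _)]
            exact Finset.card_le_card hins
          have hcard2 := Finset.card_le_card
            (Finset.filter_subset_filter (fun z => ∀ w ∈ Finset.Ico v z, h w < h z) hsubIco)
          omega
        · have hdescy : ∀ w ∈ Finset.Ico v y, h w < h y := desc_step_left hinj hxv' hlow
          have hIH := (ih y (hyx.le.trans hux) hvy).2 hdescy
          have hins : insert y ((Finset.Ico v y).filter fun z => ∀ w ∈ Finset.Ico v z, h w < h z)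
              ⊆ (Finset.Ico v x).filter fun z => ∀ w ∈ Finset.Ico v z, h w < h z := by
            intro a ha
            rcases Finset.mem_insert.1 ha with rfl | ha
            · exact Finset.mem_filter.2 ⟨Finset.mem_Ico.2 ⟨hvy, hyx⟩, hdescy⟩
            · exact Finset.filter_subset_filter _ hsubIco ha
          have hcard1 : ((Finset.Ico v y).filter fun z => ∀ w ∈ Finset.Ico v z, h w < h z).card + 1
              ≤ ((Finset.Ico v x).filter fun z => ∀ w ∈ Finset.Ico v z, h w < h z).card := by
            rw [← Finset.card_insert_of_notMem (hynotmem _)]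
            exact Finset.card_le_card hins
          omega
      · intro hdesc
        have hlow : h y < h x := hdesc y (Finset.mem_Ico.2 ⟨hvy, hyx⟩)
        have hdescy : ∀ w ∈ Finset.Ico v y, h w < h y := desc_step_left hinj hxv' hlow
        have hIH := (ih y (hyx.le.trans hux) hvy).2 hdescy
        have hins : insert y ((Finset.Ico v y).filter fun z => ∀ w ∈ Finset.Ico v z, h w < h z)
            ⊆ (Finset.Ico v x).filter fun z => ∀ w ∈ Finset.Ico v z, h w < h z := by
          intro a ha
          rcases Finset.mem_insert.1 ha with rfl | ha
          · exact Finset.mem_filter.2 ⟨Finset.mem_Ico.2 ⟨hvy, hyx⟩, hdescy⟩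
          · exact Finset.filter_subset_filter _ hsubIco ha
        have hcard1 : ((Finset.Ico v y).filter fun z => ∀ w ∈ Finset.Ico v z, h w < h z).card + 1
            ≤ ((Finset.Ico v x).filter fun z => ∀ w ∈ Finset.Ico v z, h w < h z).card := by
          rw [← Finset.card_insert_of_notMem (hynotmem _)]
          exact Finset.card_le_card hins
        omega

lemma dist_le_right {h : Fin n → ℝ} (hinj : Function.Injective h) {u v : Fin n} (huv : u < v) :
    dist h u v ≤
      ((Finset.Ioc u v).filter fun z => ∀ w ∈ Finset.Ioo u z, h w < h z).card +
      ((Finset.Ioc u v).filter fun z => ∀ w ∈ Finset.Ioc z v, h w < h z).card :=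
  (count_right hinj u v n u le_rfl huv.le).1 (by simp)

lemma dist_le_left {h : Fin n → ℝ} (hinj : Function.Injective h) {u v : Fin n} (hvu : v < u) :
    dist h u v ≤
      ((Finset.Ico v u).filter fun z => ∀ w ∈ Finset.Ioo z u, h w < h z).card +
      ((Finset.Ico v u).filter fun z => ∀ w ∈ Finset.Ico v z, h w < h z).card :=
  (count_left hinj u v n u le_rfl hvu.le).1 (by simp)


/-! ### Order-pattern invariance and measurability of `dist` -/

lemma isEdge_congr {h h' : Fin n → ℝ} (hc : ∀ i j, h i < h j ↔ h' i < h' j) (u v : Fin n) :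
    IsEdge h u v ↔ IsEdge h' u v := by
  unfold IsEdge
  refine and_congr Iff.rfl (forall_congr' fun x => ?_)
  refine imp_congr Iff.rfl (imp_congr Iff.rfl ?_)
  rw [lt_min_iff, lt_min_iff, hc, hc]

lemma nextHop_congr {h h' : Fin n → ℝ} (hc : ∀ i j, h i < h j ↔ h' i < h' j) (v x : Fin n) :
    nextHop h v x = nextHop h' v x := by
  classical
  unfold nextHop
  have h1 : (Finset.univ.filter fun y => IsEdge h x y ∧ x < y ∧ y ≤ v)
      = Finset.univ.filter fun y => IsEdge h' x y ∧ x < y ∧ y ≤ v :=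
    Finset.filter_congr fun y _ => by rw [isEdge_congr hc]
  have h2 : (Finset.univ.filter fun y => IsEdge h x y ∧ v ≤ y ∧ y < x)
      = Finset.univ.filter fun y => IsEdge h' x y ∧ v ≤ y ∧ y < x :=
    Finset.filter_congr fun y _ => by rw [isEdge_congr hc]
  rw [h1, h2]

lemma routeAux_congr {h h' : Fin n → ℝ} (hc : ∀ i j, h i < h j ↔ h' i < h' j) (v : Fin n) :
    ∀ fuel x, routeAux h v fuel x = routeAux h' v fuel x := by
  intro fuel
  induction fuel with
  | zero => intro x; simp [routeAux]
  | succ f ih =>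
    intro x
    by_cases hx : x = v
    · simp [routeAux, hx]
    · rw [routeAux, routeAux, if_neg hx, if_neg hx, nextHop_congr hc, ih]

lemma dist_congr {h h' : Fin n → ℝ} (hc : ∀ i j, h i < h j ↔ h' i < h' j) (u v : Fin n) :
    dist h u v = dist h' u v := by
  unfold dist route
  rw [routeAux_congr hc]

lemma measurable_distFun (u v : Fin n) :
    Measurable fun x : Fin n → ℝ => (dist x u v : ℝ) := by
  classical
  set pat : (Fin n → ℝ) → (Fin n → Fin n → Bool) := fun x i j => decide (x i < x j) with hpatdef
  have hpat : Measurable pat := by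
    refine measurable_pi_lambda _ fun i => measurable_pi_lambda _ fun j => ?_
    have heq : (fun x : Fin n → ℝ => pat x i j)
        = fun x => if x i < x j then true else false := by
      funext x; by_cases hx : x i < x j <;> simp [hpatdef, hx]
    rw [heq]
    exact Measurable.ite (measurableSet_lt (measurable_pi_apply i) (measurable_pi_apply j))
      measurable_const measurable_const
  set g : (Fin n → Fin n → Bool) → ℝ := fun b =>
    if hb : ∃ y : Fin n → ℝ, pat y = b then (dist hb.choose u v : ℝ) else 0 with hgdef
  have hkey : (fun x : Fin n → ℝ => (dist x u v : ℝ)) = g ∘ pat := by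
    funext x
    have hb : ∃ y : Fin n → ℝ, pat y = pat x := ⟨x, rfl⟩
    simp only [hgdef, Function.comp_apply, dif_pos hb]
    have hspec := hb.choose_spec
    have hcc : ∀ i j, hb.choose i < hb.choose j ↔ x i < x j := by
      intro i j
      have := congrFun (congrFun hspec i) j
      simpa [hpatdef, decide_eq_decide] using this
    rw [dist_congr hcc]
  rw [hkey]
  exact (measurable_of_countable g).comp hpat

/-! ### Harmonic and rank sums -/

lemma harmonic_le_log (m : ℕ) :
    ∑ k ∈ Finset.range m, (1 : ℝ) / (k + 1) ≤ 1 + Real.log m := by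
  induction m with
  | zero => simp
  | succ m ih =>
    rcases Nat.eq_zero_or_pos m with rfl | hm
    · norm_num
    · rw [Finset.sum_range_succ]
      have hm0 : (0 : ℝ) < m := by exact_mod_cast hm
      have h1 : Real.log ((m : ℝ) / (m + 1)) ≤ (m : ℝ) / (m + 1) - 1 :=
        Real.log_le_sub_one_of_pos (by positivity)
      have h2 : Real.log ((m : ℝ) / (m + 1)) = Real.log m - Real.log (m + 1) :=
        Real.log_div (by positivity) (by positivity)
      have h3 : (m : ℝ) / (m + 1) - 1 = -(1 / (m + 1)) := by field_simp; ring
      have h4 : Real.log m + 1 / ((m : ℝ) + 1) ≤ Real.log ((m : ℕ) + 1 : ℝ) := by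
        push_cast
        linarith [h1, h2.symm.le]
      have : ((m + 1 : ℕ) : ℝ) = (m : ℝ) + 1 := by push_cast; ring
      rw [this]
      push_cast
      linarith
lemma harmonic_le_log' {m N : ℕ} (hmN : m ≤ N) (hN : 1 ≤ N) :
    ∑ k ∈ Finset.range m, (1 : ℝ) / (k + 1) ≤ 1 + Real.log N := by
  refine (harmonic_le_log m).trans ?_
  rcases Nat.eq_zero_or_pos m with rfl | hm
  · simp only [Nat.cast_zero, Real.log_zero]
    have : (0 : ℝ) ≤ Real.log N := Real.log_nonneg (by exact_mod_cast hN)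
    linarith
  · have := Real.log_le_log (by exact_mod_cast hm : (0:ℝ) < m)
      (by exact_mod_cast hmN : (m : ℝ) ≤ N)
    linarith

lemma rank_sum_le {N : ℕ} (S : Finset (Fin n)) (f : Fin n → ℕ)
    (hinj : Set.InjOn f S) (hlt : ∀ z ∈ S, f z < S.card) (hSN : S.card ≤ N) (hN : 1 ≤ N) :
    ∑ z ∈ S, (1 : ℝ) / (f z + 1) ≤ 1 + Real.log N := by
  classical
  have himg : S.image f ⊆ Finset.range S.card := by
    intro k hk
    obtain ⟨z, hz, rfl⟩ := Finset.mem_image.1 hk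
    exact Finset.mem_range.2 (hlt z hz)
  calc ∑ z ∈ S, (1:ℝ)/(f z + 1)
      = ∑ k ∈ S.image f, (1:ℝ)/(k+1) :=
        (Finset.sum_image (f := fun k : ℕ => (1:ℝ)/(k+1)) (g := f)
          fun x hx y hy e => hinj hx hy e).symm
    _ ≤ ∑ k ∈ Finset.range S.card, (1:ℝ)/(k+1) :=
        Finset.sum_le_sum_of_subset_of_nonneg himg (fun k _ _ => by positivity)
    _ ≤ 1 + Real.log N := harmonic_le_log' hSN hN

lemma rank_lemma_lt (S : Finset (Fin n)) :
    Set.InjOn (fun z => (S.filter fun w => w < z).card) S ∧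
    ∀ z ∈ S, (S.filter fun w => w < z).card < S.card := by
  classical
  have hmono : ∀ {z z' : Fin n}, z ∈ S → z < z' →
      (S.filter fun w => w < z).card < (S.filter fun w => w < z').card := by
    intro z z' hz hzz
    refine Finset.card_lt_card ?_
    rw [Finset.ssubset_iff_of_subset
      (Finset.monotone_filter_right S fun w _ (hw : w < z) => hw.trans hzz)]
    exact ⟨z, Finset.mem_filter.2 ⟨hz, hzz⟩, fun hc => absurd (Finset.mem_filter.1 hc).2
      (lt_irrefl z)⟩
  constructor
  · intro z hz z' hz' he
    by_contra hne
    rcases lt_or_gt_of_ne hne with hlt | hlt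
    · exact absurd he (Nat.ne_of_lt (hmono hz hlt))
    · exact absurd he (Nat.ne_of_gt (hmono hz' hlt))
  · intro z hz
    refine Finset.card_lt_card ?_
    rw [Finset.ssubset_iff_of_subset (Finset.filter_subset _ _)]
    exact ⟨z, hz, fun hc => absurd (Finset.mem_filter.1 hc).2 (lt_irrefl z)⟩

lemma rank_lemma_gt (S : Finset (Fin n)) :
    Set.InjOn (fun z => (S.filter fun w => z < w).card) S ∧
    ∀ z ∈ S, (S.filter fun w => z < w).card < S.card := by
  classical
  have hmono : ∀ {z z' : Fin n}, z' ∈ S → z < z' →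
      (S.filter fun w => z' < w).card < (S.filter fun w => z < w).card := by
    intro z z' hz' hzz
    refine Finset.card_lt_card ?_
    rw [Finset.ssubset_iff_of_subset
      (Finset.monotone_filter_right S fun w _ (hw : z' < w) => hzz.trans hw)]
    exact ⟨z', Finset.mem_filter.2 ⟨hz', hzz⟩, fun hc => absurd (Finset.mem_filter.1 hc).2
      (lt_irrefl z')⟩
  constructor
  · intro z hz z' hz' he
    by_contra hne
    rcases lt_or_gt_of_ne hne with hlt | hlt
    · exact absurd he (Nat.ne_of_gt (hmono hz' hlt))
    · exact absurd he (Nat.ne_of_lt (hmono hz hlt))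
  · intro z hz
    refine Finset.card_lt_card ?_
    rw [Finset.ssubset_iff_of_subset (Finset.filter_subset _ _)]
    exact ⟨z, hz, fun hc => absurd (Finset.mem_filter.1 hc).2 (lt_irrefl z)⟩

lemma sum_inv_c_le {N : ℕ} (hN : 1 ≤ N) (p : Fin n → ℕ) (L : ℕ)
    (hp : ∀ u : Fin n, 1 ≤ p u ∧ p u ≤ L)
    (I : Finset (Fin n)) (hIN : I.card ≤ N) (c : Fin n → ℕ)
    (hc : ∀ ℓ ∈ Finset.Icc 1 L, Set.InjOn c (I.filter fun w => p w = ℓ) ∧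
          ∀ z ∈ I.filter (fun w => p w = ℓ), c z < (I.filter fun w => p w = ℓ).card) :
    ∑ z ∈ I, (1:ℝ)/(c z + 1) ≤ L * (1 + Real.log N) := by
  classical
  rw [← Finset.sum_fiberwise_of_maps_to
    (fun z _ => Finset.mem_Icc.2 ⟨(hp z).1, (hp z).2⟩) (fun z => (1:ℝ)/(c z + 1))]
  calc ∑ ℓ ∈ Finset.Icc 1 L, ∑ z ∈ I.filter (fun w => p w = ℓ), (1:ℝ)/(c z + 1)
      ≤ ∑ ℓ ∈ Finset.Icc 1 L, (1 + Real.log N) := by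
        refine Finset.sum_le_sum fun ℓ hℓ => ?_
        exact rank_sum_le _ c (hc ℓ hℓ).1 (hc ℓ hℓ).2
          (le_trans (Finset.card_le_card (Finset.filter_subset _ _)) hIN) hN
    _ = L * (1 + Real.log N) := by
        rw [Finset.sum_const, Nat.card_Icc]
        simp only [Nat.add_sub_cancel, nsmul_eq_mul]

/-! ### Probability lemmas -/

lemma pi_map_comp_perm {ι : Type*} [Fintype ι] (ν : Measure ℝ) [SigmaFinite ν]
    (σ : Equiv.Perm ι) :
    Measure.map (fun x : ι → ℝ => x ∘ σ) (Measure.pi fun _ => ν) = Measure.pi fun _ => ν := by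
  refine (Measure.pi_eq fun s hs => ?_).symm
  have hmeas : Measurable fun x : ι → ℝ => x ∘ σ :=
    measurable_pi_lambda _ fun i => measurable_pi_apply (σ i)
  rw [Measure.map_apply hmeas (MeasurableSet.univ_pi hs)]
  have hpre : (fun x : ι → ℝ => x ∘ σ) ⁻¹' Set.univ.pi s
      = Set.univ.pi fun j => s (σ.symm j) := by
    ext x
    simp only [Set.mem_preimage, Set.mem_univ_pi, Function.comp]
    constructor
    · intro hx j
      have := hx (σ.symm j)
      rwa [Equiv.apply_symm_apply] at this
    · intro hx i
      have := hx (σ i)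
      rwa [Equiv.symm_apply_apply] at this
  rw [hpre, Measure.pi_pi]
  exact Equiv.prod_comp σ.symm fun j => ν (s j)

lemma nu_prob : IsProbabilityMeasure (volume.restrict (Set.Ioo (0:ℝ) 1)) := by
  constructor
  rw [Measure.restrict_apply_univ, Real.volume_Ioo]
  norm_num

lemma map_joint_eq_pi {Ω : Type} [MeasurableSpace Ω] (μ : Measure Ω) [IsProbabilityMeasure μ]
    (U : Fin n → Ω → ℝ) (hU1 : ∀ i, Measurable (U i))
    (hU2 : iIndepFun U μ)
    (hU3 : ∀ i, Measure.map (U i) μ = volume.restrict (Set.Ioo (0:ℝ) 1)) :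
    Measure.map (fun ω (i : Fin n) => U i ω) μ
      = Measure.pi fun _ => volume.restrict (Set.Ioo (0:ℝ) 1) := by
  haveI := nu_prob
  refine (Measure.pi_eq fun s hs => ?_).symm
  have hmeas : Measurable fun ω (i : Fin n) => U i ω := measurable_pi_lambda _ hU1
  rw [Measure.map_apply hmeas (MeasurableSet.univ_pi hs)]
  have hpre : (fun ω (i : Fin n) => U i ω) ⁻¹' Set.univ.pi s = ⋂ i, U i ⁻¹' s i := by
    ext ω
    simp [Set.mem_univ_pi, Set.mem_iInter]
  rw [hpre, hU2.meas_iInter (fun i => ⟨s i, hs i, rfl⟩)]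
  exact Finset.prod_congr rfl fun i _ => by rw [← hU3 i, Measure.map_apply (hU1 i) (hs i)]

lemma prob_all_lt {Ω : Type} [MeasurableSpace Ω] (μ : Measure Ω) [IsProbabilityMeasure μ]
    (U : Fin n → Ω → ℝ) (hU1 : ∀ i, Measurable (U i))
    (hU2 : iIndepFun U μ)
    (hU3 : ∀ i, Measure.map (U i) μ = volume.restrict (Set.Ioo (0:ℝ) 1))
    (z : Fin n) (T : Finset (Fin n)) (hz : z ∉ T) :
    μ {ω | ∀ w ∈ T, U w ω < U z ω} ≤ (((T.card + 1 : ℕ)) : ℝ≥0∞)⁻¹ := by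
  classical
  haveI := nu_prob
  set ν := volume.restrict (Set.Ioo (0:ℝ) 1) with hν
  set P := Measure.pi fun _ : Fin n => ν with hP
  haveI : IsProbabilityMeasure P := by
    constructor
    rw [hP, ← Set.pi_univ Set.univ, Measure.pi_pi]
    simp [measure_univ]
  set S := insert z T with hS
  set E : Fin n → Set (Fin n → ℝ) := fun j => {x | ∀ i ∈ S, i ≠ j → x i < x j} with hE
  have hEmeas : ∀ j, MeasurableSet (E j) := by
    intro j
    have : E j = ⋂ i ∈ S, ⋂ (_ : i ≠ j), {x : Fin n → ℝ | x i < x j} := by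
      ext x
      simp [hE, Set.mem_iInter]
    rw [this]
    exact MeasurableSet.biInter (S : Set (Fin n)).to_countable fun i _ =>
      MeasurableSet.iInter fun _ =>
        measurableSet_lt (measurable_pi_apply i) (measurable_pi_apply j)
  have hswap : ∀ j ∈ S, ∀ k ∈ S, P (E j) = P (E k) := by
    intro j hj k hk
    rcases eq_or_ne j k with rfl | hjk
    · rfl
    set σ := Equiv.swap j k with hσ
    have hσS : ∀ i ∈ S, σ i ∈ S := by
      intro i hi
      rcases eq_or_ne i j with rfl | hij
      · simpa [hσ, Equiv.swap_apply_left] using hk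
      rcases eq_or_ne i k with rfl | hik
      · simpa [hσ, Equiv.swap_apply_right] using hj
      · rwa [hσ, Equiv.swap_apply_of_ne_of_ne hij hik]
    have hmeasg : Measurable fun x : Fin n → ℝ => x ∘ σ :=
      measurable_pi_lambda _ fun i => measurable_pi_apply _
    have h1 : P ((fun x : Fin n → ℝ => x ∘ σ) ⁻¹' E j) = P (E j) := by
      rw [hP, ← Measure.map_apply hmeasg (hEmeas j), pi_map_comp_perm ν σ]
    rw [← h1]
    congr 1
    ext x
    simp only [Set.mem_preimage, hE, Set.mem_setOf_eq, Function.comp]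
    constructor
    · intro hx i' hi' hik
      have h2 : σ i' ∈ S := hσS i' hi'
      have h3 : σ i' ≠ j := by
        intro e
        have : i' = k := by
          have := congrArg σ e
          rwa [hσ, Equiv.swap_apply_self, Equiv.swap_apply_left] at this
        exact hik this
      have h4 := hx (σ i') h2 h3
      rwa [show σ (σ i') = i' from Equiv.swap_apply_self _ _ _,
        show σ j = k from Equiv.swap_apply_left _ _] at h4
    · intro hx i hi hij
      have h2 : σ i ∈ S := hσS i hi
      have h3 : σ i ≠ k := by
        intro e
        have : i = j := by
          have := congrArg σ e
          rwa [hσ, Equiv.swap_apply_self, Equiv.swap_apply_right] at this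
        exact hij this
      have h4 := hx (σ i) h2 h3
      rwa [show σ j = k from Equiv.swap_apply_left _ _]
  have hdisj : (S : Set (Fin n)).PairwiseDisjoint E := by
    intro j hj k hk hjk
    refine Set.disjoint_left.2 fun x hxj hxk => ?_
    have h1 := hxj k hk (Ne.symm hjk)
    have h2 := hxk j hj hjk
    exact absurd h1 (asymm h2)
  have hsum : ∑ j ∈ S, P (E j) ≤ 1 := by
    rw [← measure_biUnion_finset hdisj fun j _ => hEmeas j]
    exact (measure_mono (Set.subset_univ _)).trans (le_of_eq measure_univ)
  have hzS : z ∈ S := Finset.mem_insert_self z T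
  have hcard : ((S.card : ℕ) : ℝ≥0∞) * P (E z) ≤ 1 := by
    have heq : ∑ j ∈ S, P (E j) = ∑ _j ∈ S, P (E z) :=
      Finset.sum_congr rfl fun j hj => hswap j hj z hzS
    rw [heq, Finset.sum_const, nsmul_eq_mul] at hsum
    exact hsum
  have hcardS : S.card = T.card + 1 := Finset.card_insert_of_notMem hz
  have hevent : {ω | ∀ w ∈ T, U w ω < U z ω} = (fun ω (i : Fin n) => U i ω) ⁻¹' E z := by
    ext ω
    simp only [Set.mem_setOf_eq, Set.mem_preimage, hE]
    constructor
    · intro hw i hi hiz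
      rcases Finset.mem_insert.1 hi with rfl | hi
      · exact absurd rfl hiz
      · exact hw i hi
    · intro hx w hw
      exact hx w (Finset.mem_insert_of_mem hw) fun e => hz (e ▸ hw)
  have hfinal : μ {ω | ∀ w ∈ T, U w ω < U z ω} = P (E z) := by
    rw [hevent, ← Measure.map_apply (measurable_pi_lambda _ hU1) (hEmeas z),
      map_joint_eq_pi μ U hU1 hU2 hU3, ← hν, ← hP]
  rw [hfinal, ENNReal.le_inv_iff_mul_le, mul_comm]
  rw [hcardS] at hcard
  exact hcard


/-! ### Almost-sure injectivity of heights -/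

lemma ae_injective_heights {Ω : Type} [MeasurableSpace Ω] (μ : Measure Ω) [IsProbabilityMeasure μ]
    (U : Fin n → Ω → ℝ) (hU1 : ∀ i, Measurable (U i))
    (hU2 : iIndepFun U μ)
    (hU3 : ∀ i, Measure.map (U i) μ = volume.restrict (Set.Ioo (0:ℝ) 1))
    (p : Fin n → ℕ) :
    ∀ᵐ ω ∂μ, Function.Injective fun i => (p i : ℝ) + U i ω := by
  have hpair : ∀ i j : Fin n, i ≠ j →
      μ {ω | (p i : ℝ) + U i ω = (p j : ℝ) + U j ω} = 0 := by
    intro i j hij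
    have hind : IndepFun (U i) (U j) μ := hU2.indepFun hij
    have hmap : Measure.map (fun ω => (U i ω, U j ω)) μ
        = (Measure.map (U i) μ).prod (Measure.map (U j) μ) :=
      (indepFun_iff_map_prod_eq_prod_map_map (hU1 i).aemeasurable (hU1 j).aemeasurable).1 hind
    have hsmeas : MeasurableSet {q : ℝ × ℝ | q.1 = q.2 + ((p j : ℝ) - (p i : ℝ))} :=
      measurableSet_eq_fun measurable_fst (measurable_snd.add_const _)
    have hset : {ω | (p i:ℝ) + U i ω = (p j:ℝ) + U j ω}
        = (fun ω => (U i ω, U j ω)) ⁻¹'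
          {q : ℝ × ℝ | q.1 = q.2 + ((p j : ℝ) - (p i : ℝ))} := by
      ext ω
      simp only [Set.mem_setOf_eq, Set.mem_preimage]
      constructor <;> intro he <;> linarith
    rw [hset, ← Measure.map_apply ((hU1 i).prodMk (hU1 j)) hsmeas, hmap, hU3 i, hU3 j,
      Measure.prod_apply hsmeas]
    have hzero : ∀ x : ℝ, (volume.restrict (Set.Ioo (0:ℝ) 1))
        (Prod.mk x ⁻¹' {q : ℝ × ℝ | q.1 = q.2 + ((p j : ℝ) - (p i : ℝ))}) = 0 := by
      intro x
      have hslice : (Prod.mk x ⁻¹' {q : ℝ × ℝ | q.1 = q.2 + ((p j : ℝ) - (p i : ℝ))})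
          = {x - ((p j : ℝ) - (p i : ℝ))} := by
        ext y
        simp only [Set.mem_preimage, Set.mem_setOf_eq, Set.mem_singleton_iff]
        constructor <;> intro he <;> linarith
      rw [hslice, Measure.restrict_apply (measurableSet_singleton _)]
      exact measure_mono_null Set.inter_subset_left Real.volume_singleton
    simp only [hzero]
    exact lintegral_zero
  have hall : ∀ᵐ ω ∂μ, ∀ i j : Fin n, i ≠ j → (p i:ℝ) + U i ω ≠ (p j:ℝ) + U j ω := by
    rw [MeasureTheory.ae_all_iff]
    intro i
    rw [MeasureTheory.ae_all_iff]
    intro j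
    rcases eq_or_ne i j with rfl | hij
    · filter_upwards with ω hne
      exact absurd rfl hne
    · rw [MeasureTheory.ae_iff]
      refine measure_mono_null ?_ (hpair i j hij)
      intro ω hω
      simp only [Set.mem_setOf_eq] at hω ⊢
      push_neg at hω
      exact hω.2
  filter_upwards [hall] with ω hω
  intro i j e
  by_contra hij
  exact hω i j hij e

/-! ### The main expectation bound -/

lemma expected_dist_le {n : ℕ} (hn : 2 ≤ n) (Ω : Type) [MeasurableSpace Ω] (μ : Measure Ω)
    [IsProbabilityMeasure μ] (U : Fin n → Ω → ℝ) (hU1 : ∀ i, Measurable (U i))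
    (hU2 : iIndepFun U μ)
    (hU3 : ∀ i, Measure.map (U i) μ = volume.restrict (Set.Ioo (0:ℝ) 1))
    (p : Fin n → ℕ) (hp : ∀ u, 1 ≤ p u ∧ p u ≤ ⌈Real.log n⌉₊) (u v : Fin n) :
    ∫ ω, (dist (fun i => (p i : ℝ) + U i ω) u v : ℝ) ∂μ ≤ 13 * Real.log n ^ 2 := by
  classical
  set L := ⌈Real.log n⌉₊ with hL
  have hn1 : (1:ℝ) ≤ (n:ℝ) := by exact_mod_cast (by omega : 1 ≤ n)
  have hlogn0 : 0 ≤ Real.log n := Real.log_nonneg hn1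
  have hlog2 : (0.6931471803 : ℝ) < Real.log 2 := Real.log_two_gt_d9
  have hlogmono : Real.log 2 ≤ Real.log n :=
    Real.log_le_log (by norm_num) (by exact_mod_cast hn)
  have hRHS0 : (0:ℝ) ≤ 13 * Real.log n ^ 2 := by positivity
  set hgt : Ω → Fin n → ℝ := fun ω i => (p i : ℝ) + U i ω with hhgt
  have hgtmeas : Measurable hgt := measurable_pi_lambda _ fun i => measurable_const.add (hU1 i)
  have hfmeas : Measurable fun ω => (dist (hgt ω) u v : ℝ) :=
    (measurable_distFun u v).comp hgtmeas
  have hfbd : ∀ ω, ‖(dist (hgt ω) u v : ℝ)‖ ≤ (n:ℝ) := by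
    intro ω
    rw [Real.norm_eq_abs, abs_of_nonneg (by positivity)]
    have h1 : dist (hgt ω) u v ≤ n := by
      have := routeAux_length_le (hgt ω) v n u
      unfold dist route
      omega
    exact_mod_cast h1
  have hfint : Integrable (fun ω => (dist (hgt ω) u v : ℝ)) μ :=
    (integrable_const (n:ℝ)).mono' hfmeas.aestronglyMeasurable (ae_of_all _ hfbd)
  have hLle : (L : ℝ) ≤ Real.log n + 1 := (Nat.ceil_lt_add_one hlogn0).le
  have hnum : 2 * ((L:ℝ) * (1 + Real.log n)) ≤ 13 * Real.log n ^ 2 := by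
    have h2 : (L:ℝ) * (1 + Real.log n) ≤ (Real.log n + 1) * (1 + Real.log n) :=
      mul_le_mul_of_nonneg_right hLle (by linarith)
    nlinarith [sq_nonneg (Real.log n - 0.6931471803)]
  have hIN : ∀ I : Finset (Fin n), I.card ≤ n := fun I => by
    simpa using Finset.card_le_univ I
  have hn1' : 1 ≤ n := by omega
  rcases lt_trichotomy u v with huv | huv | huv
  · -- u < v
    set I := Finset.Ioc u v with hI
    set A : Fin n → Set Ω := fun z => {ω | ∀ w ∈ Finset.Ioo u z, hgt ω w < hgt ω z} with hA
    set B : Fin n → Set Ω := fun z => {ω | ∀ w ∈ Finset.Ioc z v, hgt ω w < hgt ω z} with hB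
    have hAmeas : ∀ z, MeasurableSet (A z) := by
      intro z
      have he : A z = ⋂ w ∈ Finset.Ioo u z, {ω | hgt ω w < hgt ω z} := by
        ext ω; simp [hA, Set.mem_iInter]
      rw [he]
      exact MeasurableSet.biInter (Finset.Ioo u z : Set (Fin n)).to_countable fun w _ =>
        measurableSet_lt (measurable_const.add (hU1 w)) (measurable_const.add (hU1 z))
    have hBmeas : ∀ z, MeasurableSet (B z) := by
      intro z
      have he : B z = ⋂ w ∈ Finset.Ioc z v, {ω | hgt ω w < hgt ω z} := by
        ext ω; simp [hB, Set.mem_iInter]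
      rw [he]
      exact MeasurableSet.biInter (Finset.Ioc z v : Set (Fin n)).to_countable fun w _ =>
        measurableSet_lt (measurable_const.add (hU1 w)) (measurable_const.add (hU1 z))
    set g : Ω → ℝ := fun ω => ∑ z ∈ I,
      ((if ω ∈ A z then (1:ℝ) else 0) + (if ω ∈ B z then (1:ℝ) else 0)) with hg
    have hgind : ∀ z : Fin n, (fun ω => if ω ∈ A z then (1:ℝ) else 0)
        = (A z).indicator (fun _ => (1:ℝ)) := by
      intro z; funext ω; rw [Set.indicator_apply]
    have hgindB : ∀ z : Fin n, (fun ω => if ω ∈ B z then (1:ℝ) else 0)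
        = (B z).indicator (fun _ => (1:ℝ)) := by
      intro z; funext ω; rw [Set.indicator_apply]
    have hintA : ∀ z, Integrable (fun ω => if ω ∈ A z then (1:ℝ) else 0) μ := fun z => by
      rw [hgind z]; exact (integrable_const (1:ℝ)).indicator (hAmeas z)
    have hintB : ∀ z, Integrable (fun ω => if ω ∈ B z then (1:ℝ) else 0) μ := fun z => by
      rw [hgindB z]; exact (integrable_const (1:ℝ)).indicator (hBmeas z)
    have hgint : Integrable g μ := by
      refine integrable_finset_sum _ fun z _ => Integrable.add ?_ ?_
      · exact hintA z
      · exact hintB z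
    have hmono : ∀ᵐ ω ∂μ, (dist (hgt ω) u v : ℝ) ≤ g ω := by
      filter_upwards [ae_injective_heights μ U hU1 hU2 hU3 p] with ω hinj
      have h1 := dist_le_right (h := hgt ω) hinj huv
      have h2 : (dist (hgt ω) u v : ℝ) ≤
          (((Finset.Ioc u v).filter fun z => ∀ w ∈ Finset.Ioo u z, hgt ω w < hgt ω z).card
           + ((Finset.Ioc u v).filter fun z => ∀ w ∈ Finset.Ioc z v, hgt ω w < hgt ω z).card
            : ℕ) := by exact_mod_cast h1
      refine h2.trans (le_of_eq ?_)
      rw [hg]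
      push_cast [Finset.card_filter]
      rw [← Finset.sum_add_distrib]
      rfl
    have hint1 : ∫ ω, (dist (hgt ω) u v : ℝ) ∂μ ≤ ∫ ω, g ω ∂μ :=
      integral_mono_ae hfint hgint hmono
    have hgval : ∫ ω, g ω ∂μ = ∑ z ∈ I, ((μ (A z)).toReal + (μ (B z)).toReal) := by
      have h0 : ∫ ω, g ω ∂μ = ∑ z ∈ I, ∫ ω,
          ((if ω ∈ A z then (1:ℝ) else 0) + (if ω ∈ B z then (1:ℝ) else 0)) ∂μ :=
        integral_finset_sum I (fun z _ => (hintA z).add (hintB z))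
      rw [h0]
      refine Finset.sum_congr rfl fun z _ => ?_
      rw [integral_add (hintA z) (hintB z)]
      congr 1
      · rw [hgind z, integral_indicator_const (1:ℝ) (hAmeas z), smul_eq_mul, mul_one, measureReal_def]
      · rw [hgindB z, integral_indicator_const (1:ℝ) (hBmeas z), smul_eq_mul, mul_one, measureReal_def]
    set cA : Fin n → ℕ := fun z => ((Finset.Ioo u z).filter fun w => p w = p z).card with hcA
    set cB : Fin n → ℕ := fun z => ((Finset.Ioc z v).filter fun w => p w = p z).card with hcB
    have hAbd : ∀ z, (μ (A z)).toReal ≤ 1/((cA z:ℝ)+1) := by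
      intro z
      have hsub : A z ⊆ {ω | ∀ w ∈ (Finset.Ioo u z).filter (fun w => p w = p z),
          U w ω < U z ω} := by
        intro ω hω w hw
        rw [Finset.mem_filter] at hw
        have h3 := hω w hw.1
        have hpw : (p w : ℝ) = (p z : ℝ) := by exact_mod_cast hw.2
        simp only [hhgt] at h3
        linarith
      have hznot : z ∉ (Finset.Ioo u z).filter (fun w => p w = p z) := fun hc =>
        absurd (Finset.mem_Ioo.1 (Finset.mem_filter.1 hc).1).2 (lt_irrefl z)
      have hle := (measure_mono hsub).trans (prob_all_lt μ U hU1 hU2 hU3 z _ hznot)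
      have htop : ((((cA z) + 1 : ℕ)) : ℝ≥0∞)⁻¹ ≠ ⊤ := by
        simp
      have h4 := ENNReal.toReal_mono htop hle
      rw [ENNReal.toReal_inv, ENNReal.toReal_natCast] at h4
      rw [one_div]
      exact_mod_cast h4
    have hBbd : ∀ z, (μ (B z)).toReal ≤ 1/((cB z:ℝ)+1) := by
      intro z
      have hsub : B z ⊆ {ω | ∀ w ∈ (Finset.Ioc z v).filter (fun w => p w = p z),
          U w ω < U z ω} := by
        intro ω hω w hw
        rw [Finset.mem_filter] at hw
        have h3 := hω w hw.1
        have hpw : (p w : ℝ) = (p z : ℝ) := by exact_mod_cast hw.2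
        simp only [hhgt] at h3
        linarith
      have hznot : z ∉ (Finset.Ioc z v).filter (fun w => p w = p z) := fun hc =>
        absurd (Finset.mem_Ioc.1 (Finset.mem_filter.1 hc).1).1 (lt_irrefl z)
      have hle := (measure_mono hsub).trans (prob_all_lt μ U hU1 hU2 hU3 z _ hznot)
      have htop : ((((cB z) + 1 : ℕ)) : ℝ≥0∞)⁻¹ ≠ ⊤ := by
        simp
      have h4 := ENNReal.toReal_mono htop hle
      rw [ENNReal.toReal_inv, ENNReal.toReal_natCast] at h4
      rw [one_div]
      exact_mod_cast h4
    have hsumA : ∑ z ∈ I, (1:ℝ)/((cA z:ℝ)+1) ≤ L * (1 + Real.log n) := by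
      refine sum_inv_c_le hn1' p L hp I (hIN I) cA ?_
      intro ℓ hℓ
      have hfib : ∀ z ∈ I.filter (fun w => p w = ℓ),
          cA z = ((I.filter fun w => p w = ℓ).filter fun w => w < z).card := by
        intro z hz
        rw [Finset.mem_filter] at hz
        have hrfl : cA z = ((Finset.Ioo u z).filter fun w => p w = p z).card := rfl
        rw [hrfl]
        congr 1
        ext w
        simp only [Finset.mem_filter, Finset.mem_Ioo, Finset.mem_Ioc, hI]
        constructor
        · rintro ⟨⟨huw, hwz⟩, hpw⟩
          exact ⟨⟨⟨huw, hwz.le.trans (Finset.mem_Ioc.1 hz.1).2⟩, by rw [hpw, hz.2]⟩, hwz⟩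
        · rintro ⟨⟨⟨huw, _⟩, hpw⟩, hwz⟩
          exact ⟨⟨huw, hwz⟩, by rw [hpw, hz.2]⟩
      obtain ⟨hinj0, hlt0⟩ := rank_lemma_lt (I.filter fun w => p w = ℓ)
      constructor
      · intro a ha b hb he
        exact hinj0 ha hb
          (((hfib a (Finset.mem_coe.1 ha)).symm.trans he).trans (hfib b (Finset.mem_coe.1 hb)))
      · intro z hz
        rw [hfib z hz]
        exact hlt0 z hz
    have hsumB : ∑ z ∈ I, (1:ℝ)/((cB z:ℝ)+1) ≤ L * (1 + Real.log n) := by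
      refine sum_inv_c_le hn1' p L hp I (hIN I) cB ?_
      intro ℓ hℓ
      have hfib : ∀ z ∈ I.filter (fun w => p w = ℓ),
          cB z = ((I.filter fun w => p w = ℓ).filter fun w => z < w).card := by
        intro z hz
        rw [Finset.mem_filter] at hz
        have hrfl : cB z = ((Finset.Ioc z v).filter fun w => p w = p z).card := rfl
        rw [hrfl]
        congr 1
        ext w
        simp only [Finset.mem_filter, Finset.mem_Ioc, hI]
        constructor
        · rintro ⟨⟨hzw, hwv⟩, hpw⟩
          exact ⟨⟨⟨(Finset.mem_Ioc.1 hz.1).1.trans hzw, hwv⟩, by rw [hpw, hz.2]⟩, hzw⟩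
        · rintro ⟨⟨⟨_, hwv⟩, hpw⟩, hzw⟩
          exact ⟨⟨hzw, hwv⟩, by rw [hpw, hz.2]⟩
      obtain ⟨hinj0, hlt0⟩ := rank_lemma_gt (I.filter fun w => p w = ℓ)
      constructor
      · intro a ha b hb he
        exact hinj0 ha hb
          (((hfib a (Finset.mem_coe.1 ha)).symm.trans he).trans (hfib b (Finset.mem_coe.1 hb)))
      · intro z hz
        rw [hfib z hz]
        exact hlt0 z hz
    calc ∫ ω, (dist (hgt ω) u v : ℝ) ∂μ ≤ ∫ ω, g ω ∂μ := hint1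
      _ = ∑ z ∈ I, ((μ (A z)).toReal + (μ (B z)).toReal) := hgval
      _ ≤ ∑ z ∈ I, ((1:ℝ)/((cA z:ℝ)+1) + (1:ℝ)/((cB z:ℝ)+1)) :=
          Finset.sum_le_sum fun z _ => add_le_add (hAbd z) (hBbd z)
      _ = (∑ z ∈ I, (1:ℝ)/((cA z:ℝ)+1)) + ∑ z ∈ I, (1:ℝ)/((cB z:ℝ)+1) :=
          Finset.sum_add_distrib
      _ ≤ L * (1 + Real.log n) + L * (1 + Real.log n) := add_le_add hsumA hsumB
      _ ≤ 13 * Real.log n ^ 2 := by linarith [hnum]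
  · -- u = v
    subst huv
    have : (fun ω => (dist (hgt ω) u u : ℝ)) = fun _ => (0:ℝ) := by
      funext ω
      rw [dist_self]
      norm_num
    rw [this, integral_zero]
    exact hRHS0
  · -- v < u
    set I := Finset.Ico v u with hI
    set A : Fin n → Set Ω := fun z => {ω | ∀ w ∈ Finset.Ioo z u, hgt ω w < hgt ω z} with hA
    set B : Fin n → Set Ω := fun z => {ω | ∀ w ∈ Finset.Ico v z, hgt ω w < hgt ω z} with hB
    have hAmeas : ∀ z, MeasurableSet (A z) := by
      intro z
      have he : A z = ⋂ w ∈ Finset.Ioo z u, {ω | hgt ω w < hgt ω z} := by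
        ext ω; simp [hA, Set.mem_iInter]
      rw [he]
      exact MeasurableSet.biInter (Finset.Ioo z u : Set (Fin n)).to_countable fun w _ =>
        measurableSet_lt (measurable_const.add (hU1 w)) (measurable_const.add (hU1 z))
    have hBmeas : ∀ z, MeasurableSet (B z) := by
      intro z
      have he : B z = ⋂ w ∈ Finset.Ico v z, {ω | hgt ω w < hgt ω z} := by
        ext ω; simp [hB, Set.mem_iInter]
      rw [he]
      exact MeasurableSet.biInter (Finset.Ico v z : Set (Fin n)).to_countable fun w _ =>
        measurableSet_lt (measurable_const.add (hU1 w)) (measurable_const.add (hU1 z))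
    set g : Ω → ℝ := fun ω => ∑ z ∈ I,
      ((if ω ∈ A z then (1:ℝ) else 0) + (if ω ∈ B z then (1:ℝ) else 0)) with hg
    have hgind : ∀ z : Fin n, (fun ω => if ω ∈ A z then (1:ℝ) else 0)
        = (A z).indicator (fun _ => (1:ℝ)) := by
      intro z; funext ω; rw [Set.indicator_apply]
    have hgindB : ∀ z : Fin n, (fun ω => if ω ∈ B z then (1:ℝ) else 0)
        = (B z).indicator (fun _ => (1:ℝ)) := by
      intro z; funext ω; rw [Set.indicator_apply]
    have hintA : ∀ z, Integrable (fun ω => if ω ∈ A z then (1:ℝ) else 0) μ := fun z => by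
      rw [hgind z]; exact (integrable_const (1:ℝ)).indicator (hAmeas z)
    have hintB : ∀ z, Integrable (fun ω => if ω ∈ B z then (1:ℝ) else 0) μ := fun z => by
      rw [hgindB z]; exact (integrable_const (1:ℝ)).indicator (hBmeas z)
    have hgint : Integrable g μ := by
      refine integrable_finset_sum _ fun z _ => Integrable.add ?_ ?_
      · exact hintA z
      · exact hintB z
    have hmono : ∀ᵐ ω ∂μ, (dist (hgt ω) u v : ℝ) ≤ g ω := by
      filter_upwards [ae_injective_heights μ U hU1 hU2 hU3 p] with ω hinj
      have h1 := dist_le_left (h := hgt ω) hinj huv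
      have h2 : (dist (hgt ω) u v : ℝ) ≤
          (((Finset.Ico v u).filter fun z => ∀ w ∈ Finset.Ioo z u, hgt ω w < hgt ω z).card
           + ((Finset.Ico v u).filter fun z => ∀ w ∈ Finset.Ico v z, hgt ω w < hgt ω z).card
            : ℕ) := by exact_mod_cast h1
      refine h2.trans (le_of_eq ?_)
      rw [hg]
      push_cast [Finset.card_filter]
      rw [← Finset.sum_add_distrib]
      rfl
    have hint1 : ∫ ω, (dist (hgt ω) u v : ℝ) ∂μ ≤ ∫ ω, g ω ∂μ :=
      integral_mono_ae hfint hgint hmono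
    have hgval : ∫ ω, g ω ∂μ = ∑ z ∈ I, ((μ (A z)).toReal + (μ (B z)).toReal) := by
      have h0 : ∫ ω, g ω ∂μ = ∑ z ∈ I, ∫ ω,
          ((if ω ∈ A z then (1:ℝ) else 0) + (if ω ∈ B z then (1:ℝ) else 0)) ∂μ :=
        integral_finset_sum I (fun z _ => (hintA z).add (hintB z))
      rw [h0]
      refine Finset.sum_congr rfl fun z _ => ?_
      rw [integral_add (hintA z) (hintB z)]
      congr 1
      · rw [hgind z, integral_indicator_const (1:ℝ) (hAmeas z), smul_eq_mul, mul_one, measureReal_def]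
      · rw [hgindB z, integral_indicator_const (1:ℝ) (hBmeas z), smul_eq_mul, mul_one, measureReal_def]
    set cA : Fin n → ℕ := fun z => ((Finset.Ioo z u).filter fun w => p w = p z).card with hcA
    set cB : Fin n → ℕ := fun z => ((Finset.Ico v z).filter fun w => p w = p z).card with hcB
    have hAbd : ∀ z, (μ (A z)).toReal ≤ 1/((cA z:ℝ)+1) := by
      intro z
      have hsub : A z ⊆ {ω | ∀ w ∈ (Finset.Ioo z u).filter (fun w => p w = p z),
          U w ω < U z ω} := by
        intro ω hω w hw
        rw [Finset.mem_filter] at hw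
        have h3 := hω w hw.1
        have hpw : (p w : ℝ) = (p z : ℝ) := by exact_mod_cast hw.2
        simp only [hhgt] at h3
        linarith
      have hznot : z ∉ (Finset.Ioo z u).filter (fun w => p w = p z) := fun hc =>
        absurd (Finset.mem_Ioo.1 (Finset.mem_filter.1 hc).1).1 (lt_irrefl z)
      have hle := (measure_mono hsub).trans (prob_all_lt μ U hU1 hU2 hU3 z _ hznot)
      have htop : ((((cA z) + 1 : ℕ)) : ℝ≥0∞)⁻¹ ≠ ⊤ := by
        simp
      have h4 := ENNReal.toReal_mono htop hle
      rw [ENNReal.toReal_inv, ENNReal.toReal_natCast] at h4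
      rw [one_div]
      exact_mod_cast h4
    have hBbd : ∀ z, (μ (B z)).toReal ≤ 1/((cB z:ℝ)+1) := by
      intro z
      have hsub : B z ⊆ {ω | ∀ w ∈ (Finset.Ico v z).filter (fun w => p w = p z),
          U w ω < U z ω} := by
        intro ω hω w hw
        rw [Finset.mem_filter] at hw
        have h3 := hω w hw.1
        have hpw : (p w : ℝ) = (p z : ℝ) := by exact_mod_cast hw.2
        simp only [hhgt] at h3
        linarith
      have hznot : z ∉ (Finset.Ico v z).filter (fun w => p w = p z) := fun hc =>
        absurd (Finset.mem_Ico.1 (Finset.mem_filter.1 hc).1).2 (lt_irrefl z)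
      have hle := (measure_mono hsub).trans (prob_all_lt μ U hU1 hU2 hU3 z _ hznot)
      have htop : ((((cB z) + 1 : ℕ)) : ℝ≥0∞)⁻¹ ≠ ⊤ := by
        simp
      have h4 := ENNReal.toReal_mono htop hle
      rw [ENNReal.toReal_inv, ENNReal.toReal_natCast] at h4
      rw [one_div]
      exact_mod_cast h4
    have hsumA : ∑ z ∈ I, (1:ℝ)/((cA z:ℝ)+1) ≤ L * (1 + Real.log n) := by
      refine sum_inv_c_le hn1' p L hp I (hIN I) cA ?_
      intro ℓ hℓ
      have hfib : ∀ z ∈ I.filter (fun w => p w = ℓ),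
          cA z = ((I.filter fun w => p w = ℓ).filter fun w => z < w).card := by
        intro z hz
        rw [Finset.mem_filter] at hz
        have hrfl : cA z = ((Finset.Ioo z u).filter fun w => p w = p z).card := rfl
        rw [hrfl]
        congr 1
        ext w
        simp only [Finset.mem_filter, Finset.mem_Ioo, Finset.mem_Ico, hI]
        constructor
        · rintro ⟨⟨hzw, hwu⟩, hpw⟩
          exact ⟨⟨⟨((Finset.mem_Ico.1 hz.1).1).trans hzw.le, hwu⟩, by rw [hpw, hz.2]⟩, hzw⟩
        · rintro ⟨⟨⟨_, hwu⟩, hpw⟩, hzw⟩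
          exact ⟨⟨hzw, hwu⟩, by rw [hpw, hz.2]⟩
      obtain ⟨hinj0, hlt0⟩ := rank_lemma_gt (I.filter fun w => p w = ℓ)
      constructor
      · intro a ha b hb he
        exact hinj0 ha hb
          (((hfib a (Finset.mem_coe.1 ha)).symm.trans he).trans (hfib b (Finset.mem_coe.1 hb)))
      · intro z hz
        rw [hfib z hz]
        exact hlt0 z hz
    have hsumB : ∑ z ∈ I, (1:ℝ)/((cB z:ℝ)+1) ≤ L * (1 + Real.log n) := by
      refine sum_inv_c_le hn1' p L hp I (hIN I) cB ?_
      intro ℓ hℓ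
      have hfib : ∀ z ∈ I.filter (fun w => p w = ℓ),
          cB z = ((I.filter fun w => p w = ℓ).filter fun w => w < z).card := by
        intro z hz
        rw [Finset.mem_filter] at hz
        have hrfl : cB z = ((Finset.Ico v z).filter fun w => p w = p z).card := rfl
        rw [hrfl]
        congr 1
        ext w
        simp only [Finset.mem_filter, Finset.mem_Ico, hI]
        constructor
        · rintro ⟨⟨hvw, hwz⟩, hpw⟩
          exact ⟨⟨⟨hvw, hwz.trans (Finset.mem_Ico.1 hz.1).2⟩, by rw [hpw, hz.2]⟩, hwz⟩
        · rintro ⟨⟨⟨hvw, _⟩, hpw⟩, hwz⟩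
          exact ⟨⟨hvw, hwz⟩, by rw [hpw, hz.2]⟩
      obtain ⟨hinj0, hlt0⟩ := rank_lemma_lt (I.filter fun w => p w = ℓ)
      constructor
      · intro a ha b hb he
        exact hinj0 ha hb
          (((hfib a (Finset.mem_coe.1 ha)).symm.trans he).trans (hfib b (Finset.mem_coe.1 hb)))
      · intro z hz
        rw [hfib z hz]
        exact hlt0 z hz
    calc ∫ ω, (dist (hgt ω) u v : ℝ) ∂μ ≤ ∫ ω, g ω ∂μ := hint1
      _ = ∑ z ∈ I, ((μ (A z)).toReal + (μ (B z)).toReal) := hgval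
      _ ≤ ∑ z ∈ I, ((1:ℝ)/((cA z:ℝ)+1) + (1:ℝ)/((cB z:ℝ)+1)) :=
          Finset.sum_le_sum fun z _ => add_le_add (hAbd z) (hBbd z)
      _ = (∑ z ∈ I, (1:ℝ)/((cA z:ℝ)+1)) + ∑ z ∈ I, (1:ℝ)/((cB z:ℝ)+1) :=
          Finset.sum_add_distrib
      _ ≤ L * (1 + Real.log n) + L * (1 + Real.log n) := add_le_add hsumA hsumB
      _ ≤ 13 * Real.log n ^ 2 := by linarith [hnum]


/-- There is an absolute constant `C` such that in the LASLiN model on `n ≥ 2` nodes (heights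
`p u + U u` with integer predictions `p u ∈ {1, …, ⌈ln n⌉}` and `U` i.i.d. uniform on `(0,1)`),
for any two distinct nodes the expected routing path length is at most `C ln² n`; consequently,
for any nonnegative demand matrix `W`, the expected total weighted path length is at most
`C ln² n · |W|`. -/
theorem laslin_expected_path_length :
    ∃ C : ℝ, 0 < C ∧ ∀ n : ℕ, 2 ≤ n →
      ∀ (Ω : Type) [MeasurableSpace Ω] (μ : Measure Ω), IsProbabilityMeasure μ →
      ∀ U : Fin n → Ω → ℝ, (∀ i, Measurable (U i)) →
        iIndepFun U μ →
        (∀ i, Measure.map (U i) μ = volume.restrict (Set.Ioo (0 : ℝ) 1)) →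
        ∀ p : Fin n → ℕ, (∀ u, 1 ≤ p u ∧ p u ≤ ⌈Real.log n⌉₊) →
        (∀ u v : Fin n, u ≠ v →
          ∫ ω, (dist (fun i => (p i : ℝ) + U i ω) u v : ℝ) ∂μ ≤ C * Real.log n ^ 2) ∧
        (∀ W : Fin n → Fin n → ℝ, (∀ u v, 0 ≤ W u v) →
          ∫ ω, (∑ u : Fin n, ∑ v : Fin n,
              W u v * (dist (fun i => (p i : ℝ) + U i ω) u v : ℝ)) ∂μ ≤
            C * Real.log n ^ 2 * ∑ u : Fin n, ∑ v : Fin n, W u v) := by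
  refine ⟨13, by norm_num, ?_⟩
  intro n hn Ω _ μ hμ U hU1 hU2 hU3 p hp
  haveI := hμ
  have hdist : ∀ u v : Fin n,
      ∫ ω, (dist (fun i => (p i : ℝ) + U i ω) u v : ℝ) ∂μ ≤ 13 * Real.log n ^ 2 :=
    fun u v => expected_dist_le hn Ω μ U hU1 hU2 hU3 p hp u v
  refine ⟨fun u v _ => hdist u v, ?_⟩
  intro W hW
  have hint : ∀ u v : Fin n,
      Integrable (fun ω => (dist (fun i => (p i : ℝ) + U i ω) u v : ℝ)) μ := by
    intro u v
    have hgtmeas : Measurable fun ω (i : Fin n) => (p i : ℝ) + U i ω :=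
      measurable_pi_lambda _ fun i => measurable_const.add (hU1 i)
    have hfmeas : Measurable fun ω => (dist (fun i => (p i : ℝ) + U i ω) u v : ℝ) :=
      (measurable_distFun u v).comp hgtmeas
    refine (integrable_const (n:ℝ)).mono' hfmeas.aestronglyMeasurable (ae_of_all _ ?_)
    intro ω
    rw [Real.norm_eq_abs, abs_of_nonneg (by positivity)]
    have h1 : dist (fun i => (p i : ℝ) + U i ω) u v ≤ n := by
      have := routeAux_length_le (fun i => (p i : ℝ) + U i ω) v n u
      unfold dist route
      omega
    exact_mod_cast h1
  have hintuv : ∀ u v : Fin n,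
      Integrable (fun ω => W u v * (dist (fun i => (p i : ℝ) + U i ω) u v : ℝ)) μ :=
    fun u v => (hint u v).const_mul _
  have hsplit : ∫ ω, (∑ u : Fin n, ∑ v : Fin n,
        W u v * (dist (fun i => (p i : ℝ) + U i ω) u v : ℝ)) ∂μ
      = ∑ u : Fin n, ∑ v : Fin n,
        W u v * ∫ ω, (dist (fun i => (p i : ℝ) + U i ω) u v : ℝ) ∂μ := by
    rw [integral_finset_sum _ (fun u _ => integrable_finset_sum _ fun v _ => hintuv u v)]
    refine Finset.sum_congr rfl fun u _ => ?_
    rw [integral_finset_sum _ (fun v _ => hintuv u v)]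
    refine Finset.sum_congr rfl fun v _ => ?_
    exact integral_const_mul _ _
  rw [hsplit]
  calc ∑ u : Fin n, ∑ v : Fin n,
        W u v * ∫ ω, (dist (fun i => (p i : ℝ) + U i ω) u v : ℝ) ∂μ
      ≤ ∑ u : Fin n, ∑ v : Fin n, W u v * (13 * Real.log n ^ 2) :=
        Finset.sum_le_sum fun u _ => Finset.sum_le_sum fun v _ =>
          mul_le_mul_of_nonneg_left (hdist u v) (hW u v)
    _ = 13 * Real.log n ^ 2 * ∑ u : Fin n, ∑ v : Fin n, W u v := by
        rw [Finset.mul_sum]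
        refine Finset.sum_congr rfl fun u _ => ?_
        rw [Finset.mul_sum]
        refine Finset.sum_congr rfl fun v _ => ?_
        ring

end P2P
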